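/- Let K be a field, X a finite nonempty alphabet, and S : X* → K a rational series whose minimal linear representations have rank n ≥ 1. Let Γ = { S(w) : w ∈ X* } ⊆ K. Then S has a minimal linear representation (u, μ, v) of rank n such that every coordinate of u·μ(w) lies in Γ for every w ∈ X*, and v = e₁ is the first standard basis column vector. -/

import Mathlib

/-- Product of the matrices `μ x` along the word `w`. -/
def wordProd {X K : Type*} [Semiring K] {n : ℕ} (μ : X → Matrix (Fin n) (Fin n) K)
    (w : List X) : Matrix (Fin n) (Fin n) K :=
  (w.map μ).prod

/-- `(u, μ, v)` is a linear representation of the series `S : X* → K`. -/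
def IsLinRep {X K : Type*} [Semiring K] {n : ℕ} (S : List X → K)
    (u : Fin n → K) (μ : X → Matrix (Fin n) (Fin n) K) (v : Fin n → K) : Prop :=
  ∀ w : List X, S w = dotProduct u (Matrix.mulVec (wordProd μ w) v)

/-- A series is rational if it admits a linear representation. -/
def IsRational {X K : Type*} [Semiring K] (S : List X → K) : Prop :=
  ∃ (n : ℕ) (u : Fin n → K) (μ : X → Matrix (Fin n) (Fin n) K) (v : Fin n → K),
    IsLinRep S u μ v

/-- `p` is an accepting path for the word `w` in the weighted automaton associated to
`(u, μ, v)`. -/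
def IsAcceptingPath {X K : Type*} [Semiring K] {n : ℕ}
    (u : Fin n → K) (μ : X → Matrix (Fin n) (Fin n) K) (v : Fin n → K)
    (w : List X) (p : Fin (w.length + 1) → Fin n) : Prop :=
  u (p 0) ≠ 0 ∧
  (∀ i : Fin w.length, μ (w.get i) (p i.castSucc) (p i.succ) ≠ 0) ∧
  v (p (Fin.last w.length)) ≠ 0

/-- The linear representation `(u, μ, v)` is unambiguous: every word labels at most one
accepting path. -/
def IsUnambiguous {X K : Type*} [Semiring K] {n : ℕ}
    (u : Fin n → K) (μ : X → Matrix (Fin n) (Fin n) K) (v : Fin n → K) : Prop :=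
  ∀ (w : List X) (p q : Fin (w.length + 1) → Fin n),
    IsAcceptingPath u μ v w p → IsAcceptingPath u μ v w q → p = q

/-- `S` is a Pólya series: its nonzero coefficients lie in a finitely generated subgroup
of `Kˣ`. -/
def IsPolya {X K : Type*} [Field K] (S : List X → K) : Prop :=
  ∃ G : Subgroup Kˣ, G.FG ∧ ∀ w : List X, S w = 0 ∨ ∃ g ∈ G, (g : K) = S w

/-- The linear representation is deterministic: at most one initial state, and every row
of each `μ x` has at most one nonzero entry. -/
def IsDeterministic {X K : Type*} [Semiring K] {n : ℕ}
    (u : Fin n → K) (μ : X → Matrix (Fin n) (Fin n) K) : Prop :=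
  (∀ i j : Fin n, u i ≠ 0 → u j ≠ 0 → i = j) ∧
  ∀ (x : X) (p q q' : Fin n), μ x p q ≠ 0 → μ x p q' ≠ 0 → q = q'

/-- Minimal linear representation: no linear representation of `S` has smaller rank. -/
def IsMinimalRep {X K : Type*} [Semiring K] {n : ℕ} (S : List X → K)
    (u : Fin n → K) (μ : X → Matrix (Fin n) (Fin n) K) (v : Fin n → K) : Prop :=
  IsLinRep S u μ v ∧
  ∀ (m : ℕ) (u' : Fin m → K) (μ' : X → Matrix (Fin m) (Fin m) K) (v' : Fin m → K),
    IsLinRep S u' μ' v' → n ≤ m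

/-- The set `Ω = {u · μ(w) : w ∈ X*}` is contained in a finite union of subspaces of
dimension at most 1, i.e. the linear hull has dimension at most 1. -/
def HullDimLE1 {X K : Type*} [Field K] {n : ℕ}
    (u : Fin n → K) (μ : X → Matrix (Fin n) (Fin n) K) : Prop :=
  ∃ (k : ℕ) (W : Fin k → Submodule K (Fin n → K)),
    (∀ i, Module.finrank K (W i) ≤ 1) ∧
    ∀ w : List X, ∃ i, Matrix.vecMul u (wordProd μ w) ∈ W i

/-!
Let `(u, μ, v)` be a minimal representation. The vectors `μ(t) v` span `Kⁿ`: their span is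
`μ`-invariant and contains `v`, so restricting to it gives a representation of rank its
dimension. Hence some of them, `v = μ(t₁) v, μ(t₂) v, …, μ(tₙ) v`, form a basis. Conjugating
by the matrix `P` with these columns turns `v` into `e₁`, and the `i`-th coordinate of
`u P · P⁻¹ μ(w) P = u μ(w) P` is `u μ(w) μ(tᵢ) v = S(w tᵢ)`.
-/

open Matrix Module

section Semiring

variable {X K : Type*} [Semiring K] {m n : ℕ}

@[simp]
theorem wordProd_nil (μ : X → Matrix (Fin n) (Fin n) K) : wordProd μ [] = 1 := rfl

@[simp]
theorem wordProd_cons (μ : X → Matrix (Fin n) (Fin n) K) (x : X) (w : List X) :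
    wordProd μ (x :: w) = μ x * wordProd μ w :=
  List.prod_cons

theorem wordProd_append (μ : X → Matrix (Fin n) (Fin n) K) (w t : List X) :
    wordProd μ (w ++ t) = wordProd μ w * wordProd μ t := by
  simp [wordProd]

theorem wordProd_mul_eq_mul_wordProd {μ : X → Matrix (Fin n) (Fin n) K}
    {ν : X → Matrix (Fin m) (Fin m) K} {C : Matrix (Fin n) (Fin m) K}
    (hC : ∀ x, μ x * C = C * ν x) (w : List X) :
    wordProd μ w * C = C * wordProd ν w := by
  induction w with
  | nil => simp
  | cons x w ih =>
    rw [wordProd_cons, wordProd_cons, Matrix.mul_assoc, ih, ← Matrix.mul_assoc, hC,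
      Matrix.mul_assoc]

variable {S : List X → K} {u : Fin n → K} {μ : X → Matrix (Fin n) (Fin n) K} {v : Fin n → K}

theorem IsLinRep.of_mul_eq_mul {ν : X → Matrix (Fin m) (Fin m) K} {C : Matrix (Fin n) (Fin m) K}
    {v' : Fin m → K} (h : IsLinRep S u μ (C *ᵥ v')) (hC : ∀ x, μ x * C = C * ν x) :
    IsLinRep S (u ᵥ* C) ν v' := by
  intro w
  rw [h w, mulVec_mulVec, wordProd_mul_eq_mul_wordProd hC, ← mulVec_mulVec, dotProduct_mulVec]

theorem IsLinRep.vecMul_wordProd_dotProduct (h : IsLinRep S u μ v) (w t : List X) :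
    u ᵥ* wordProd μ w ⬝ᵥ wordProd μ t *ᵥ v = S (w ++ t) := by
  rw [h, wordProd_append, ← mulVec_mulVec]
  exact (dotProduct_mulVec _ _ _).symm

theorem IsMinimalRep.final_ne_zero (h : IsMinimalRep S u μ v) (hn : 0 < n) : v ≠ 0 := by
  rintro rfl
  have hzero : IsLinRep S (0 : Fin 0 → K) 0 0 := fun w => by simp [h.1 w]
  exact hn.ne' (Nat.le_zero.mp (h.2 0 _ _ _ hzero))

end Semiring

section Field

variable {X K : Type*} [Field K] {n : ℕ} {S : List X → K} {u : Fin n → K}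
  {μ : X → Matrix (Fin n) (Fin n) K} {v : Fin n → K}

theorem IsLinRep.exists_of_invariant (h : IsLinRep S u μ v) (W : Submodule K (Fin n → K))
    (hv : v ∈ W) (hW : ∀ x, W ≤ W.comap (toLin' (μ x))) :
    ∃ (u' : Fin (finrank K W) → K) (μ' : X → Matrix _ _ K) (v' : Fin (finrank K W) → K),
      IsLinRep S u' μ' v' := by
  let e := (finBasis K W).equivFun
  let C := LinearMap.toMatrix' (W.subtype ∘ₗ e.symm.toLinearMap)
  let ν : X → Matrix _ _ K := fun x =>
    LinearMap.toMatrix' (e.toLinearMap ∘ₗ (toLin' (μ x)).restrict (hW x) ∘ₗ e.symm.toLinearMap)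
  have hCv : C *ᵥ e ⟨v, hv⟩ = v := by simp [C]
  refine ⟨u ᵥ* C, ν, e ⟨v, hv⟩, IsLinRep.of_mul_eq_mul (hCv ▸ h) fun x => ?_⟩
  refine toLin'.injective (LinearMap.ext fun y => ?_)
  simp [C, ν, toLin'_mul]

theorem IsMinimalRep.span_range_mulVec_eq_top (h : IsMinimalRep S u μ v) :
    Submodule.span K (Set.range fun w => wordProd μ w *ᵥ v) = ⊤ := by
  set W := Submodule.span K (Set.range fun w => wordProd μ w *ᵥ v)
  have hW : ∀ x, W ≤ W.comap (toLin' (μ x)) := fun x =>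
    Submodule.span_le.mpr <| by
      rintro _ ⟨w, rfl⟩
      exact Submodule.subset_span ⟨x :: w, by simp [mulVec_mulVec]⟩
  obtain ⟨u', μ', v', h'⟩ :=
    h.1.exists_of_invariant W (Submodule.subset_span ⟨[], by simp⟩) hW
  apply Submodule.eq_top_of_finrank_eq
  exact le_antisymm (by simpa using W.finrank_le) (by simpa using h.2 _ _ _ _ h')

end Field

theorem exists_basis_fin_mem_of_span_eq_top {K V : Type*} [Field K] [AddCommGroup V]
    [Module K V] {n : ℕ} (hV : finrank K V = n) {T : Set V} (hT : Submodule.span K T = ⊤)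
    {v : V} (hvT : v ∈ T) (hv : v ≠ 0) (i : Fin n) :
    ∃ b : Basis (Fin n) K V, b i = v ∧ ∀ j, b j ∈ T := by
  have : FiniteDimensional K V := Module.finite_of_finrank_pos (hV ▸ i.pos)
  have hsT : {v} ⊆ T := Set.singleton_subset_iff.mpr hvT
  let b₀ := Basis.extendLe (.singleton hv) hsT hT.ge
  let e₀ := (Finite.equivFin _).trans (finCongr ((finrank_eq_nat_card_basis b₀).symm.trans hV))
  let e := (Equiv.swap i (e₀ ⟨v, LinearIndepOn.subset_extend _ hsT rfl⟩)).trans e₀.symm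
  refine ⟨b₀.reindex e.symm, by simp [e, b₀], fun j => ?_⟩
  simpa [b₀] using LinearIndepOn.extend_subset _ hsT (e j).2

theorem good_basis_minimal_rep_general {K X : Type*} [Field K]
    (S : List X → K) {n : ℕ} (hn : 1 ≤ n)
    (hmin : ∃ (u : Fin n → K) (μ : X → Matrix (Fin n) (Fin n) K) (v : Fin n → K),
      IsMinimalRep S u μ v) :
    ∃ (u : Fin n → K) (μ : X → Matrix (Fin n) (Fin n) K) (v : Fin n → K),
      IsMinimalRep S u μ v ∧
      (∀ (w : List X) (i : Fin n), ∃ w' : List X, Matrix.vecMul u (wordProd μ w) i = S w') ∧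
      v = Pi.single (⟨0, hn⟩ : Fin n) 1 := by
  obtain ⟨u, μ, v, h⟩ := hmin
  obtain ⟨b, hbv, hbT⟩ := exists_basis_fin_mem_of_span_eq_top (finrank_fin_fun K)
    h.span_range_mulVec_eq_top ⟨[], by simp⟩ (h.final_ne_zero hn) ⟨0, hn⟩
  let P := (Pi.basisFun K (Fin n)).toMatrix b
  let _ : Invertible P := (Pi.basisFun K (Fin n)).invertibleToMatrix b
  have hP : ∀ j, P *ᵥ Pi.single j 1 = b j := fun j => by
    ext i
    simp [P, Basis.toMatrix_apply]
  have hconj : ∀ x, μ x * P = P * (P⁻¹ * μ x * P) := fun x => by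
    simp [← mul_assoc, mul_inv_of_invertible]
  refine ⟨u ᵥ* P, fun x => P⁻¹ * μ x * P, Pi.single ⟨0, hn⟩ 1,
    ⟨IsLinRep.of_mul_eq_mul (by rw [hP, hbv]; exact h.1) hconj, h.2⟩, fun w i => ?_, rfl⟩
  obtain ⟨t, ht⟩ := hbT i
  refine ⟨w ++ t, ?_⟩
  rw [← h.1.vecMul_wordProd_dotProduct, show wordProd μ t *ᵥ v = b i from ht, ← hP,
    dotProduct_mulVec, vecMul_vecMul, vecMul_vecMul, ← wordProd_mul_eq_mul_wordProd hconj,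
    dotProduct_single_one]

/-- A rational series of minimal rank `n ≥ 1` admits a minimal linear representation
`(u, μ, v)` such that every coordinate of every `u·μ(w)` is a coefficient of `S`, and
`v` is the first standard basis vector. -/
theorem good_basis_minimal_rep {K X : Type*} [Field K] [Fintype X] [Nonempty X]
    (S : List X → K) {n : ℕ} (hn : 1 ≤ n)
    (hmin : ∃ (u : Fin n → K) (μ : X → Matrix (Fin n) (Fin n) K) (v : Fin n → K),
      IsMinimalRep S u μ v) :
    ∃ (u : Fin n → K) (μ : X → Matrix (Fin n) (Fin n) K) (v : Fin n → K),
      IsMinimalRep S u μ v ∧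
      (∀ (w : List X) (i : Fin n), ∃ w' : List X, Matrix.vecMul u (wordProd μ w) i = S w') ∧
      v = Pi.single (⟨0, hn⟩ : Fin n) 1 :=
  good_basis_minimal_rep_general S hn hmin
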